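/- arXiv:2203.09211 — 3 statements merged into one kernel-verified Lean document; each statement's English description precedes it below -/
import Mathlib

section
/- Let F : Mod A → Mod B be a functor between module categories of finite dimensional algebras that is a t-eventually homological isomorphism and essentially surjective. Then for every finitely generated A-module X, the projective dimension of F(X) over B is at most the maximum of t and the projective dimension of X over A. -/
/-!
For `j > max t n` and finitely generated `Y ≅ F X'`, the eventual homological isomorphism gives
`Ext^j_B(F X, Y) ≅ Ext^j_A(X, X') = 0`. Vanishing against arbitrary `B`-modules follows because
the condition "every `j`-cocycle `P_j ⟶ Y` of a projective resolution is a coboundary" is stable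
under products, retracts and extensions in `Y`: a module killed by the radical is semisimple, hence
a retract of the product of its cyclic submodules, and the nilpotent radical filtration of the
semiprimary ring `B` builds every module from such ones.
-/

open CategoryTheory Opposite Limits

noncomputable section

/-- `Ext^j` over the `k`-algebra `Λ`, as a `k`-module. -/
abbrev extM (k : Type) [Field k] (Λ : Type) [Ring Λ] [Algebra k Λ] (j : ℕ)
    (X Y : ModuleCat.{0} Λ) : ModuleCat k :=
  ((Ext k (ModuleCat.{0} Λ) j).obj (op X)).obj Y

/-- projective dimension at most `n`, via vanishing of `Ext^j (X, -)` for all `j > n`. -/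
def pdLE (k : Type) [Field k] (Λ : Type) [Ring Λ] [Algebra k Λ]
    (X : ModuleCat.{0} Λ) (n : ℕ) : Prop :=
  ∀ (Y : ModuleCat.{0} Λ) (j : ℕ), n < j → Subsingleton (extM k Λ j X Y)

/-- injective dimension at most `n`, via vanishing of `Ext^j (-, Y)` for all `j > n`. -/
def idLE (k : Type) [Field k] (Λ : Type) [Ring Λ] [Algebra k Λ]
    (Y : ModuleCat.{0} Λ) (n : ℕ) : Prop :=
  ∀ (X : ModuleCat.{0} Λ) (j : ℕ), n < j → Subsingleton (extM k Λ j X Y)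

/-- `X ∈ ⊥Λ`, i.e. `Ext^i (X, Λ) = 0` for all `i > 0`. -/
def MemPerp (k : Type) [Field k] (Λ : Type) [Ring Λ] [Algebra k Λ]
    (X : ModuleCat.{0} Λ) : Prop :=
  ∀ j : ℕ, 0 < j → Subsingleton (extM k Λ j X (ModuleCat.of Λ Λ))

/-- `F` is a `t`-eventually homological isomorphism: for all `j > t` there are
isomorphisms `Ext^j_A(X, Y) ≅ Ext^j_B(FX, FY)` for all finitely generated `X`, `Y`. -/
def IsEHI (k : Type) [Field k] (A B : Type) [Ring A] [Algebra k A] [Ring B] [Algebra k B]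
    (F : ModuleCat.{0} A ⥤ ModuleCat.{0} B) (t : ℕ) : Prop :=
  ∀ (X Y : ModuleCat.{0} A), Module.Finite A X → Module.Finite A Y →
    ∀ j : ℕ, t < j → Nonempty (extM k A j X Y ≅ extM k B j (F.obj X) (F.obj Y))

/-- `F` is essentially surjective on finitely generated modules. -/
def EssSurjFG (A B : Type) [Ring A] [Ring B]
    (F : ModuleCat.{0} A ⥤ ModuleCat.{0} B) : Prop :=
  ∀ Y : ModuleCat.{0} B, Module.Finite B Y →
    ∃ X : ModuleCat.{0} A, Module.Finite A X ∧ Nonempty (F.obj X ≅ Y)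

universe v

namespace ChainComplex

variable {𝒞 : Type*} [Category 𝒞]

section HasZeroMorphisms

variable [HasZeroMorphisms 𝒞]

def HomExactAtSucc (C : ChainComplex 𝒞 ℕ) (Y : 𝒞) (n : ℕ) : Prop :=
  ∀ f : C.X (n + 1) ⟶ Y, C.d (n + 2) (n + 1) ≫ f = 0 → ∃ g : C.X n ⟶ Y, f = C.d (n + 1) n ≫ g

variable {C : ChainComplex 𝒞 ℕ} {n : ℕ}

lemma HomExactAtSucc.of_retract {Y W : 𝒞} (h : C.HomExactAtSucc W n) (e : Retract Y W) :
    C.HomExactAtSucc Y n := by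
  intro f hf
  obtain ⟨g, hg⟩ := h (f ≫ e.i) (by rw [reassoc_of% hf, zero_comp])
  exact ⟨g ≫ e.r, by rw [← reassoc_of% hg, e.retract, Category.comp_id]⟩

lemma HomExactAtSucc.pi {ι : Type*} {W : ι → 𝒞} [HasProduct W]
    (h : ∀ i, C.HomExactAtSucc (W i) n) : C.HomExactAtSucc (∏ᶜ W) n := by
  intro f hf
  choose g hg using fun i => h i (f ≫ Pi.π W i) (by rw [reassoc_of% hf, zero_comp])
  exact ⟨Pi.lift g, Pi.hom_ext _ _ fun i => by simpa using hg i⟩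

end HasZeroMorphisms

lemma HomExactAtSucc.of_shortExact [Abelian 𝒞] {C : ChainComplex 𝒞 ℕ} {n : ℕ}
    [Projective (C.X n)] {S : ShortComplex 𝒞} (hS : S.ShortExact)
    (h₁ : C.HomExactAtSucc S.X₁ n) (h₃ : C.HomExactAtSucc S.X₃ n) : C.HomExactAtSucc S.X₂ n := by
  intro f hf
  have := hS.mono_f
  have := hS.epi_g
  obtain ⟨g₃, hg₃⟩ := h₃ (f ≫ S.g) (by rw [reassoc_of% hf, zero_comp])
  set g := Projective.factorThru g₃ S.g
  have hfg : (f - C.d (n + 1) n ≫ g) ≫ S.g = 0 := by simp [g, hg₃]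
  set f₁ := hS.exact.lift _ hfg
  have hf₁ : C.d (n + 2) (n + 1) ≫ f₁ = 0 := by
    rw [← cancel_mono S.f]
    simp [f₁, hf]
  obtain ⟨g₁, hg₁⟩ := h₁ f₁ hf₁
  refine ⟨g + g₁ ≫ S.f, ?_⟩
  rw [Preadditive.comp_add, ← reassoc_of% hg₁]
  simp [f₁]

end ChainComplex

lemma CategoryTheory.ProjectiveResolution.isZero_ext_succ_iff {R : Type*} [Ring R]
    {𝒞 : Type*} [Category 𝒞] [Abelian 𝒞] [Linear R 𝒞] [EnoughProjectives 𝒞]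
    {X : 𝒞} (P : ProjectiveResolution X) (Y : 𝒞) (n : ℕ) :
    IsZero (((Ext R 𝒞 (n + 1)).obj (op X)).obj Y) ↔ P.complex.HomExactAtSucc Y n := by
  rw [Iso.isZero_iff (P.isoExt (n + 1) Y), ← HomologicalComplex.exactAt_iff_isZero_homology,
    HomologicalComplex.exactAt_iff' _ n (n + 1) (n + 2) (by simp) (by simp),
    ShortComplex.moduleCat_exact_iff]
  exact forall₂_congr fun f hf => exists_congr fun g => eq_comm

lemma Module.IsTorsionBySet.isSemisimpleModule_of_jacobson {B M : Type*} [Ring B]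
    [IsSemiprimaryRing B] [AddCommGroup M] [Module B M]
    (h : Module.IsTorsionBySet B M (Ring.jacobson B)) : IsSemisimpleModule B M := by
  let _ := h.module
  exact h.isSemisimpleModule_iff.1 inferInstance

lemma Module.IsTorsionBySet.pi {B ι : Type*} [Ring B] {M : ι → Type*} [∀ i, AddCommGroup (M i)]
    [∀ i, Module B (M i)] {s : Set B} (h : ∀ i, Module.IsTorsionBySet B (M i) s) :
    Module.IsTorsionBySet B (∀ i, M i) s :=
  fun x a => funext fun i => @h i (x i) a

def ModuleCat.retractPiSpanSingleton {B : Type*} [Ring B] (Z : ModuleCat.{v} B)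
    [IsSemisimpleModule B Z] [IsSemisimpleModule B (∀ z : Z, Submodule.span B {z})] :
    Retract Z (ModuleCat.of B (∀ z : Z, Submodule.span B {z})) := by
  choose π hπ using fun z : Z =>
    IsSemisimpleModule.extension_property (Submodule.span B {z}).subtype
      (Submodule.injective_subtype _) LinearMap.id
  let ι : Z →ₗ[B] ∀ z : Z, Submodule.span B {z} := LinearMap.pi π
  have hι : Function.Injective ι := by
    refine (injective_iff_map_eq_zero ι).2 fun z hz => ?_
    have hπz : π z z = ⟨z, Submodule.mem_span_singleton_self z⟩ :=
      LinearMap.congr_fun (hπ z) ⟨z, Submodule.mem_span_singleton_self z⟩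
    have hzz : π z z = 0 := congr_fun hz z
    simpa [hπz] using hzz
  choose r hr using IsSemisimpleModule.extension_property ι hι LinearMap.id
  exact { i := ModuleCat.ofHom ι, r := ModuleCat.ofHom r, retract := by ext : 1; exact hr }

namespace ChainComplex

variable {B : Type*} [Ring B] {C : ChainComplex (ModuleCat.{v} B) ℕ} {n : ℕ}

lemma HomExactAtSucc.of_isTorsionBySet_jacobson [IsSemiprimaryRing B]
    (hfin : ∀ Y : ModuleCat.{v} B, Module.Finite B Y → C.HomExactAtSucc Y n)
    {M : Type v} [AddCommGroup M] [Module B M]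
    (hM : Module.IsTorsionBySet B M (Ring.jacobson B)) :
    C.HomExactAtSucc (ModuleCat.of B M) n := by
  have hspan : ∀ z : M, Module.IsTorsionBySet B (Submodule.span B {z}) (Ring.jacobson B) :=
    fun z x a => Subtype.ext (@hM x a)
  have := hM.isSemisimpleModule_of_jacobson
  have := (Module.IsTorsionBySet.pi hspan).isSemisimpleModule_of_jacobson
  let W := fun z : M => ModuleCat.of B (Submodule.span B {z})
  refine HomExactAtSucc.of_retract ?_
    ((ModuleCat.retractPiSpanSingleton _).trans (Retract.ofIso (ModuleCat.piIsoPi W).symm))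
  exact HomExactAtSucc.pi fun z =>
    hfin (W z) (inferInstanceAs (Module.Finite B (Submodule.span B {z})))

lemma HomExactAtSucc.of_forall_finite [IsSemiprimaryRing B] [Projective (C.X n)]
    (hfin : ∀ Y : ModuleCat.{v} B, Module.Finite B Y → C.HomExactAtSucc Y n)
    (Y : ModuleCat.{v} B) : C.HomExactAtSucc Y n := by
  refine IsSemiprimaryRing.induction ℤ B Y (P := fun M _ _ _ => C.HomExactAtSucc (.of B M) n)
    (fun M _ _ _ _ _ hM => of_isTorsionBySet_jacobson hfin hM) (fun M _ _ _ _ hN hQ => ?_)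
  let N := Ring.jacobson B • (⊤ : Submodule B M)
  have hNQ := LinearMap.exact_subtype_mkQ N
  exact HomExactAtSucc.of_shortExact (ModuleCat.shortComplex_shortExact
    (ModuleCat.shortComplexOfCompEqZero N.subtype N.mkQ hNQ.linearMap_comp_eq_zero)
    hNQ N.injective_subtype N.mkQ_surjective) hN hQ

end ChainComplex

theorem pd_le_of_ehi_general (k : Type) [Field k] (A B : Type) [Ring A] [Algebra k A]
    [Ring B] [Algebra k B] [FiniteDimensional k B]
    (F : ModuleCat.{0} A ⥤ ModuleCat.{0} B) (t : ℕ)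
    (hEHI : IsEHI k A B F t) (hSurj : EssSurjFG A B F)
    (X : ModuleCat.{0} A) (hX : Module.Finite A X) (n : ℕ) (hn : pdLE k A X n) :
    pdLE k B (F.obj X) (max t n) := by
  have : IsArtinianRing B := .of_finite k B
  let P : ProjectiveResolution (F.obj X) := HasProjectiveResolution.out.some
  rintro Y (_ | j) hj
  · omega
  have hext : ∀ Y, Subsingleton (extM k B (j + 1) (F.obj X) Y) ↔ P.complex.HomExactAtSucc Y j :=
    fun Y => ModuleCat.isZero_iff_subsingleton.symm.trans (P.isZero_ext_succ_iff Y j)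
  rw [hext]
  refine ChainComplex.HomExactAtSucc.of_forall_finite (fun Y' hY' => ?_) Y
  obtain ⟨X', hX', ⟨e⟩⟩ := hSurj Y' hY'
  obtain ⟨eExt⟩ := hEHI X X' hX hX' (j + 1) (by omega)
  rw [← hext, ← (((Ext k _ (j + 1)).obj (op (F.obj X))).mapIso e).toLinearEquiv.subsingleton_congr,
    ← eExt.toLinearEquiv.subsingleton_congr]
  exact hn X' (j + 1) (by omega)

/-- If `F : mod A → mod B` is a `t`-eventually homological isomorphism
which is essentially surjective, then `pd_B F(X) ≤ max t (pd_A X)` for every finitely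
generated `A`-module `X`. -/
theorem pd_le_of_ehi (k : Type) [Field k] (A B : Type) [Ring A] [Algebra k A] [FiniteDimensional k A]
    [Ring B] [Algebra k B] [FiniteDimensional k B]
    (F : ModuleCat.{0} A ⥤ ModuleCat.{0} B) (t : ℕ)
    (hEHI : IsEHI k A B F t) (hSurj : EssSurjFG A B F)
    (X : ModuleCat.{0} A) (hX : Module.Finite A X) (n : ℕ) (hn : pdLE k A X n) :
    pdLE k B (F.obj X) (max t n) :=
  pd_le_of_ehi_general k A B F t hEHI hSurj X hX n hn
end
end

section
/- Let F : mod A → mod B be a t-eventually homological isomorphism which is essentially surjective. Then for every finitely generated A-module X, the injective dimension of F(X) over B is at most the maximum of t and the injective dimension of X over A; moreover, if Y is a finitely generated B-module with F(Y') ≅ Y, then the injective dimension of Y' over A is at most the maximum of t and the injective dimension of Y over B. -/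
/-!
For finitely generated `W ≅ F X'`, the isomorphisms `Ext^j_B(F X', F X) ≅ Ext^j_A(X', X)` in
degrees `j > t` transport the vanishing of `Ext_A^{>n}(-, X)` to that of `Ext_B^{>max t n}(W, F X)`,
and essential surjectivity makes every finitely generated `W` of this form; the second claim is
the same argument run backwards. It therefore suffices that injective dimension is detected by
finitely generated test modules. For `n = 0` this is Baer's criterion read through the
sequence `0 → I → Λ → Λ/I → 0`: `Ext^1(Λ/I, Q) = 0` lets every `I → Q` extend to `Λ`. For
larger `n`, dimension shifting along `0 → Y → E → Ω⁻¹Y → 0` with `E` injective lowers `n` by one.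
-/

open CategoryTheory Opposite Limits

noncomputable section

universe w v u

namespace CategoryTheory

variable {C : Type u} [Category.{v} C] [Abelian C]

lemma ShortComplex.ShortExact.subsingleton_ext_X₃_of_injective [HasExt.{w} C]
    {S : ShortComplex C} (hS : S.ShortExact) [Injective S.X₂] (X : C) (i : ℕ)
    (h : Subsingleton (Abelian.Ext.{w} X S.X₁ (i + 2))) :
    Subsingleton (Abelian.Ext.{w} X S.X₃ (i + 1)) := by
  refine subsingleton_of_forall_eq 0 fun x₃ => ?_
  obtain ⟨x₂, rfl⟩ := Abelian.Ext.covariant_sequence_exact₃ X hS x₃ rfl (Subsingleton.elim _ _)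
  rw [x₂.eq_zero_of_injective, Abelian.Ext.zero_comp]

namespace ProjectiveResolution

variable {X : C} (P : ProjectiveResolution X) (Y : C) (j : ℕ)

lemma subsingleton_ext_succ_iff [HasExt.{w} C] :
    Subsingleton (Abelian.Ext.{w} X Y (j + 1)) ↔
      ∀ f : P.complex.X (j + 1) ⟶ Y, P.complex.d (j + 2) (j + 1) ≫ f = 0 →
        ∃ g : P.complex.X j ⟶ Y, P.complex.d (j + 1) j ≫ g = f := by
  refine ⟨fun _ f hf => (P.extMk_eq_zero_iff f (j + 2) rfl hf j rfl).1 (Subsingleton.elim _ _),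
    fun h => subsingleton_of_forall_eq 0 fun α => ?_⟩
  obtain ⟨f, hf, rfl⟩ := P.extMk_surjective α (j + 2) rfl
  exact (P.extMk_eq_zero_iff f (j + 2) rfl hf j rfl).2 (h f hf)

lemma subsingleton_extFunctor_succ_iff (R : Type*) [Ring R] [Linear R C]
    [EnoughProjectives C] :
    Subsingleton (((Ext R C (j + 1)).obj (op X)).obj Y) ↔
      ∀ f : P.complex.X (j + 1) ⟶ Y, P.complex.d (j + 2) (j + 1) ≫ f = 0 →
        ∃ g : P.complex.X j ⟶ Y, P.complex.d (j + 1) j ≫ g = f := by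
  rw [← ModuleCat.isZero_iff_subsingleton, (P.isoExt (j + 1) Y).isZero_iff,
    ← HomologicalComplex.exactAt_iff_isZero_homology,
    HomologicalComplex.exactAt_iff' _ j (j + 1) (j + 2) (by simp) (by simp),
    ShortComplex.moduleCat_exact_iff]
  rfl

end ProjectiveResolution

end CategoryTheory

namespace ModuleCat

variable {Λ : Type u} [Ring Λ]

lemma baer_of_subsingleton_ext_one (Q : ModuleCat.{u} Λ)
    (h : ∀ I : Ideal Λ, Subsingleton (Abelian.Ext (ModuleCat.of Λ (Λ ⧸ I)) Q 1)) :
    Module.Baer Λ Q := by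
  intro I f
  let S : ShortComplex (ModuleCat.{u} Λ) :=
    ShortComplex.mk (ModuleCat.ofHom I.subtype) (ModuleCat.ofHom I.mkQ) (by ext; simp)
  have hS : S.ShortExact :=
    ModuleCat.shortComplex_shortExact S (LinearMap.exact_subtype_mkQ I)
      I.injective_subtype I.mkQ_surjective
  obtain ⟨φ, hφ⟩ := Abelian.Ext.contravariant_sequence_exact₁ hS Q
    (Abelian.Ext.mk₀ (ModuleCat.ofHom f)) (zero_add 1) (Subsingleton.elim _ _)
  obtain ⟨φ, rfl⟩ := Abelian.Ext.homEquiv₀.symm.surjective φ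
  have hfac : S.f ≫ φ = ModuleCat.ofHom f :=
    Abelian.Ext.homEquiv₀.symm.injective (by simpa using hφ)
  exact ⟨φ.hom, fun x hx => congr($hfac ⟨x, hx⟩)⟩

lemma injective_of_forall_finite_subsingleton_ext_one (Q : ModuleCat.{u} Λ)
    (h : ∀ X : ModuleCat.{u} Λ, Module.Finite Λ X → Subsingleton (Abelian.Ext X Q 1)) :
    Injective Q := by
  rw [← Module.injective_iff_injective_object]
  exact (baer_of_subsingleton_ext_one Q fun I => h _ inferInstance).injective

lemma hasInjectiveDimensionLE_of_forall_finite (n : ℕ) (Y : ModuleCat.{u} Λ)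
    (h : ∀ X : ModuleCat.{u} Λ, Module.Finite Λ X →
      ∀ i, n < i → Subsingleton (Abelian.Ext X Y i)) :
    HasInjectiveDimensionLE Y n := by
  induction n generalizing Y with
  | zero =>
    rw [HasInjectiveDimensionLE, ← injective_iff_hasInjectiveDimensionLT_one]
    exact injective_of_forall_finite_subsingleton_ext_one Y fun X hX => h X hX 1 one_pos
  | succ n ih =>
    let S := ShortComplex.mk (Injective.ι Y) (cokernel.π _) (cokernel.condition _)
    have hS : S.ShortExact := { exact := ShortComplex.exact_cokernel _ }
    have : Injective S.X₂ := inferInstanceAs (Injective (Injective.under Y))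
    refine (hS.hasInjectiveDimensionLT_X₃_iff n this).1 (ih S.X₃ fun X hX i hi => ?_)
    obtain ⟨i, rfl⟩ : ∃ i', i = i' + 1 := ⟨i - 1, by omega⟩
    exact hS.subsingleton_ext_X₃_of_injective X i (h X hX (i + 2) (by omega))

lemma subsingleton_iff_of_iso {R : Type*} [Ring R] {M N : ModuleCat R} (e : M ≅ N) :
    Subsingleton M ↔ Subsingleton N :=
  e.toLinearEquiv.toEquiv.subsingleton_congr

end ModuleCat

section

variable (k : Type) [Field k] {Λ : Type} [Ring Λ] [Algebra k Λ]

/-- `extM` is the resolution-based `Ext` bifunctor, whereas Mathlib's injective-dimension API is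
phrased with the derived-category `Abelian.Ext`; in positive degrees both vanish exactly when every
cocycle of `Hom(P, Y)`, for a projective resolution `P` of `X`, is a coboundary. -/
lemma subsingleton_extM_iff_ext (X Y : ModuleCat.{0} Λ) {j : ℕ} (hj : 0 < j) :
    Subsingleton (extM k Λ j X Y) ↔ Subsingleton (Abelian.Ext.{0} X Y j) := by
  obtain ⟨j, rfl⟩ := Nat.exists_eq_add_one.2 hj
  let P := ProjectiveResolution.of X
  rw [P.subsingleton_extFunctor_succ_iff Y j k, P.subsingleton_ext_succ_iff]

lemma idLE_of_forall_finite (Y : ModuleCat.{0} Λ) (n : ℕ)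
    (h : ∀ X : ModuleCat.{0} Λ, Module.Finite Λ X →
      ∀ j, n < j → Subsingleton (extM k Λ j X Y)) :
    idLE k Λ Y n := by
  have : HasInjectiveDimensionLE Y n := ModuleCat.hasInjectiveDimensionLE_of_forall_finite n Y
    fun X hX i hi => (subsingleton_extM_iff_ext k X Y (by omega)).1 (h X hX i hi)
  exact fun X j hj => (subsingleton_extM_iff_ext k X Y (by omega)).2
    (HasInjectiveDimensionLT.subsingleton Y (n + 1) j hj X)

end

theorem id_le_of_ehi_general (k : Type) [Field k] (A B : Type) [Ring A] [Algebra k A]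
    [Ring B] [Algebra k B]
    (F : ModuleCat.{0} A ⥤ ModuleCat.{0} B) (t : ℕ)
    (hEHI : IsEHI k A B F t) (hSurj : EssSurjFG A B F) :
    (∀ (X : ModuleCat.{0} A), Module.Finite A X →
      ∀ n : ℕ, idLE k A X n → idLE k B (F.obj X) (max t n)) ∧
    (∀ (Y : ModuleCat.{0} B) (Y' : ModuleCat.{0} A), Module.Finite B Y →
      Module.Finite A Y' → Nonempty (F.obj Y' ≅ Y) →
      ∀ n : ℕ, idLE k B Y n → idLE k A Y' (max t n)) := by
  refine ⟨fun X hX n hXn => idLE_of_forall_finite k (F.obj X) _ fun W hW j hj => ?_,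
    fun Y Y' _ hY' ⟨e⟩ n hYn => idLE_of_forall_finite k Y' _ fun X hX j hj => ?_⟩
  · obtain ⟨X', hX', ⟨e⟩⟩ := hSurj W hW
    obtain ⟨e'⟩ := hEHI X' X hX' hX j ((le_max_left t n).trans_lt hj)
    rw [ModuleCat.subsingleton_iff_of_iso (((Ext k _ j).mapIso e.op).app _),
      ← ModuleCat.subsingleton_iff_of_iso e']
    exact hXn X' j ((le_max_right t n).trans_lt hj)
  · obtain ⟨e'⟩ := hEHI X Y' hX hY' j ((le_max_left t n).trans_lt hj)
    rw [ModuleCat.subsingleton_iff_of_iso e',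
      ModuleCat.subsingleton_iff_of_iso (((Ext k _ j).obj _).mapIso e)]
    exact hYn (F.obj X) j ((le_max_right t n).trans_lt hj)

/-- If `F : mod A → mod B` is a `t`-eventually homological isomorphism
which is essentially surjective, then `id_B F(X) ≤ max t (id_A X)` for every finitely
generated `A`-module `X`, and if `Y ∈ mod B` with `F(Y') ≅ Y` then
`id_A Y' ≤ max t (id_B Y)`. -/
theorem id_le_of_ehi (k : Type) [Field k] (A B : Type) [Ring A] [Algebra k A] [FiniteDimensional k A]
    [Ring B] [Algebra k B] [FiniteDimensional k B]
    (F : ModuleCat.{0} A ⥤ ModuleCat.{0} B) (t : ℕ)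
    (hEHI : IsEHI k A B F t) (hSurj : EssSurjFG A B F) :
    (∀ (X : ModuleCat.{0} A), Module.Finite A X →
      ∀ n : ℕ, idLE k A X n → idLE k B (F.obj X) (max t n)) ∧
    (∀ (Y : ModuleCat.{0} B) (Y' : ModuleCat.{0} A), Module.Finite B Y →
      Module.Finite A Y' → Nonempty (F.obj Y' ≅ Y) →
      ∀ n : ℕ, idLE k B Y n → idLE k A Y' (max t n)) :=
  id_le_of_ehi_general k A B F t hEHI hSurj
end
end

section
/- A finitely generated module X over a finite dimensional algebra A is Gorenstein projective if and only if there exists a family of short exact sequences 0 → X^i → P^{i+1} → X^{i+1} → 0 in mod A indexed by i ∈ ℤ, with each P^i finitely generated projective, each X^i in ⊥A, and X^0 = X. -/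
open CategoryTheory Opposite Limits

noncomputable section

/-- `X` is Gorenstein projective: it is a cycle of an acyclic complex of finitely
generated projectives which stays acyclic under `Hom(-, Q)` for every finitely
generated projective `Q`. -/
def IsGP (Λ : Type) [Ring Λ] (X : ModuleCat.{0} Λ) : Prop :=
  ∃ (P : ℤ → ModuleCat.{0} Λ) (d : ∀ i, P i ⟶ P (i + 1)),
    (∀ i, Module.Finite Λ (P i) ∧ Projective (P i)) ∧
    (∀ i, Function.Exact (d i) (d (i + 1))) ∧
    (∀ (Q : ModuleCat.{0} Λ), Module.Finite Λ Q → Projective Q → ∀ i,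
      Function.Exact (fun g : P (i + 1 + 1) ⟶ Q => d (i + 1) ≫ g)
        (fun g : P (i + 1) ⟶ Q => d i ≫ g)) ∧
    ∃ ι : X ⟶ P 0, Function.Injective ι ∧ Function.Exact ι (d 0)


/-!
The kernels of an acyclic complex `P^•` cut it into short exact sequences
`0 → Xⁱ → Pⁱ⁺¹ → Xⁱ⁺¹ → 0`, and conversely such sequences splice to an acyclic complex. In both
situations `⋯ → Pʲ⁻¹ → Pʲ → Xʲ` is a projective resolution of `Xʲ`, so `Extⁿ⁺¹(Xʲ, Y)` is the
cohomology of `Hom(P^•, Y)` at `Pʲ⁻ⁿ⁻¹`. Hence all `Xʲ` lie in `⊥A` exactly when `Hom(P^•, A)` is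
acyclic, and acyclicity of `Hom(P^•, -)` passes from `A` to products and their retracts, i.e. to
all finitely generated projectives. Finiteness of the `Xʲ` comes from `A` being noetherian.
-/

def HomExact {R : Type} [Ring R] (Y : ModuleCat.{0} R) {D₀ D₁ D₂ : ModuleCat.{0} R}
    (u : D₀ ⟶ D₁) (v : D₁ ⟶ D₂) : Prop :=
  Function.Exact (fun g : D₂ ⟶ Y => v ≫ g) (fun g : D₁ ⟶ Y => u ≫ g)

section ResolutionOfExact

variable {R : Type} [Ring R] (P : ℕ → ModuleCat.{0} R) (d : ∀ n, P (n + 1) ⟶ P n)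
  (hd : ∀ n, Function.Exact (d (n + 1)) (d n))

def chainComplexOfExact : ChainComplex (ModuleCat.{0} R) ℕ :=
  ChainComplex.of P d fun n => by ext x; exact (hd n).apply_apply_eq_zero x

@[simp]
lemma chainComplexOfExact_d (n : ℕ) : (chainComplexOfExact P d hd).d (n + 1) n = d n :=
  ChainComplex.of_d _ _ _

lemma chainComplexOfExact_exactAt_succ (n : ℕ) :
    (chainComplexOfExact P d hd).ExactAt (n + 1) := by
  rw [HomologicalComplex.exactAt_iff' _ (n + 1 + 1) (n + 1) n (by simp) (by simp),
    ShortComplex.ShortExact.moduleCat_exact_iff_function_exact]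
  change Function.Exact ((chainComplexOfExact P d hd).d _ _) ((chainComplexOfExact P d hd).d _ _)
  rw [chainComplexOfExact_d, chainComplexOfExact_d]
  exact hd n

variable {X : ModuleCat.{0} R} (ε : P 0 ⟶ X) (hP : ∀ n, Projective (P n))
  (hε : Function.Surjective ε) (hdε : Function.Exact (d 0) ε)

def projectiveResolutionOfExact : ProjectiveResolution X where
  complex := chainComplexOfExact P d hd
  projective := hP
  π := (ChainComplex.toSingle₀Equiv _ _).symm ⟨ε, by
    rw [chainComplexOfExact_d]; ext x; exact hdε.apply_apply_eq_zero x⟩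
  quasiIso := ⟨fun n => by
    cases n with
    | zero =>
      rw [ChainComplex.quasiIsoAt₀_iff, ShortComplex.quasiIso_iff_of_zeros']
      · rw [ShortComplex.ShortExact.moduleCat_exact_iff_function_exact,
          ModuleCat.epi_iff_surjective]
        exact ⟨hdε, hε⟩
      all_goals rfl
    | succ n =>
      rw [quasiIsoAt_iff_exactAt']
      · exact chainComplexOfExact_exactAt_succ P d hd n
      · exact ChainComplex.exactAt_succ_single_obj _ _⟩

include hd hP hε hdε in
lemma subsingleton_ext_succ_iff_homExact (k : Type) [Field k] [Algebra k R] (n : ℕ)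
    (Y : ModuleCat.{0} R) :
    Subsingleton (extM k R (n + 1) X Y) ↔ HomExact Y (d (n + 1)) (d n) := by
  let Q := projectiveResolutionOfExact P d hd ε hP hε hdε
  rw [← ModuleCat.isZero_iff_subsingleton, (Q.isoExt (n + 1) Y).isZero_iff,
    ← HomologicalComplex.exactAt_iff_isZero_homology,
    HomologicalComplex.exactAt_iff' _ n (n + 1) (n + 1 + 1) (by simp) (by simp),
    ShortComplex.ShortExact.moduleCat_exact_iff_function_exact]
  change Function.Exact (fun g : P n ⟶ Y => (chainComplexOfExact P d hd).d (n + 1) n ≫ g)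
    (fun g : P (n + 1) ⟶ Y => (chainComplexOfExact P d hd).d (n + 1 + 1) (n + 1) ≫ g) ↔ _
  simp only [chainComplexOfExact_d]
  rfl

end ResolutionOfExact

namespace HomExact

variable {R : Type} [Ring R] {D₀ D₁ D₂ : ModuleCat.{0} R} {u : D₀ ⟶ D₁} {v : D₁ ⟶ D₂}

lemma of_retract (huv : u ≫ v = 0) {M Q : ModuleCat.{0} R} (s : Q ⟶ M) (r : M ⟶ Q)
    (hsr : s ≫ r = 𝟙 Q) (hM : HomExact M u v) : HomExact Q u v := by
  intro y
  refine ⟨fun hy => ?_, ?_⟩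
  · obtain ⟨g, hg⟩ := (hM (y ≫ s)).1 (by simp only at hy ⊢; rw [reassoc_of% hy, zero_comp])
    refine ⟨g ≫ r, ?_⟩
    simp only at hg ⊢
    rw [reassoc_of% hg, hsr, Category.comp_id]
  · rintro ⟨g, rfl⟩
    simp only [reassoc_of% huv, zero_comp]

lemma pi (huv : u ≫ v = 0) (ι : Type) {M : ModuleCat.{0} R} (hM : HomExact M u v) :
    HomExact (ModuleCat.of R (ι → M)) u v := by
  intro y
  refine ⟨fun hy => ?_, ?_⟩
  · have hcomp (l : ι) : ∃ g : D₂ ⟶ M, v ≫ g = y ≫ ModuleCat.ofHom (LinearMap.proj l) :=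
      (hM _).1 (by simp only at hy ⊢; rw [reassoc_of% hy, zero_comp])
    choose g hg using hcomp
    refine ⟨ModuleCat.ofHom (LinearMap.pi fun l => (g l).hom), ?_⟩
    ext x l
    simpa using ConcreteCategory.congr_hom (hg l) x
  · rintro ⟨g, rfl⟩
    simp only [reassoc_of% huv, zero_comp]

lemma of_finite_projective (huv : u ≫ v = 0) (hR : HomExact (ModuleCat.of R R) u v)
    (Q : ModuleCat.{0} R) [Module.Finite R Q] [Projective Q] : HomExact Q u v := by
  have : Module.Projective R Q := (IsProjective.iff_projective Q).mpr inferInstance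
  obtain ⟨m, f, hf⟩ := Module.Finite.exists_fin' R Q
  obtain ⟨s, hs⟩ := Module.projective_lifting_property f LinearMap.id hf
  exact (hR.pi huv (Fin m)).of_retract huv (ModuleCat.ofHom s) (ModuleCat.ofHom f)
    (by ext x; exact LinearMap.congr_fun hs x)

end HomExact

structure ShortExactSplicing (R : Type) [Ring R] where
  P : ℤ → ModuleCat.{0} R
  Z : ℤ → ModuleCat.{0} R
  ι : ∀ i, Z i ⟶ P i
  π : ∀ i, P i ⟶ Z (i + 1)
  injective_ι : ∀ i, Function.Injective (ι i)
  surjective_π : ∀ i, Function.Surjective (π i)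
  exact : ∀ i, Function.Exact (ι i) (π i)

namespace ShortExactSplicing

variable {R : Type} [Ring R] (S : ShortExactSplicing R)

def d (i : ℤ) : S.P i ⟶ S.P (i + 1) := S.π i ≫ S.ι (i + 1)

lemma exact_ι_d (i : ℤ) : Function.Exact (S.ι i) (S.d i) :=
  ((S.injective_ι (i + 1)).comp_exact_iff_exact (g := (S.π i).hom)).2 (S.exact i)

lemma exact_d_π (i : ℤ) : Function.Exact (S.d i) (S.π (i + 1)) :=
  ((S.surjective_π i).comp_exact_iff_exact (f := (S.ι (i + 1)).hom)).2 (S.exact (i + 1))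

lemma exact_d (i : ℤ) : Function.Exact (S.d i) (S.d (i + 1)) :=
  ((S.injective_ι (i + 1 + 1)).comp_exact_iff_exact (g := (S.π (i + 1)).hom)).2 (S.exact_d_π i)

lemma d_comp_d (i : ℤ) : S.d i ≫ S.d (i + 1) = 0 := by
  ext x; exact (S.exact_d i).apply_apply_eq_zero x

def ofExact (P : ℤ → ModuleCat.{0} R) (d : ∀ i, P i ⟶ P (i + 1))
    (hd : ∀ i, Function.Exact (d i) (d (i + 1))) : ShortExactSplicing R where
  P := P
  Z i := ModuleCat.of R (LinearMap.ker (d i).hom)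
  ι i := ModuleCat.ofHom (LinearMap.ker (d i).hom).subtype
  π i := ModuleCat.ofHom ((d i).hom.codRestrict _ fun x => (hd i).apply_apply_eq_zero x)
  injective_ι i := Subtype.val_injective
  surjective_π i := fun ⟨y, hy⟩ => by
    obtain ⟨x, rfl⟩ := (hd i y).1 hy
    exact ⟨x, rfl⟩
  exact i := (Subtype.val_injective.comp_exact_iff_exact
    (i := (LinearMap.ker (d (i + 1)).hom).subtype)).1 (LinearMap.exact_subtype_ker_map _)

-- Target indices only propositionally equal to `a + 1` arise when the resolution of `Z j` is
-- indexed by `ℕ`.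
def dOfEq {a b : ℤ} (h : a + 1 = b) : S.P a ⟶ S.P b := S.d a ≫ eqToHom (congrArg S.P h)

def πOfEq {a b : ℤ} (h : a + 1 = b) : S.P a ⟶ S.Z b := S.π a ≫ eqToHom (congrArg S.Z h)

lemma exact_dOfEq {a b c : ℤ} (hab : a + 1 = b) (hbc : b + 1 = c) :
    Function.Exact (S.dOfEq hab) (S.dOfEq hbc) := by
  subst hab hbc; simpa [dOfEq] using S.exact_d a

lemma exact_dOfEq_πOfEq {a b c : ℤ} (hab : a + 1 = b) (hbc : b + 1 = c) :
    Function.Exact (S.dOfEq hab) (S.πOfEq hbc) := by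
  subst hab hbc; simpa [dOfEq, πOfEq] using S.exact_d_π a

lemma surjective_πOfEq {a b : ℤ} (h : a + 1 = b) : Function.Surjective (S.πOfEq h) := by
  subst h; simpa [πOfEq] using S.surjective_π a

lemma homExact_dOfEq_iff {a b c : ℤ} (hab : a + 1 = b) (hbc : b + 1 = c) (Y : ModuleCat.{0} R) :
    HomExact Y (S.dOfEq hab) (S.dOfEq hbc) ↔ HomExact Y (S.d a) (S.d (a + 1)) := by
  subst hab hbc; simp [dOfEq]

/-- With `j = a + 3 + n`, `⋯ → P (j - 2) → P (j - 1) → Z j` is a projective resolution of `Z j`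
whose `(n + 1)`-st term is `P (a + 1)`. -/
lemma subsingleton_ext_succ_iff_homExact (k : Type) [Field k] [Algebra k R]
    (hP : ∀ i, Projective (S.P i)) (a : ℤ) (n : ℕ) (Y : ModuleCat.{0} R) :
    Subsingleton (extM k R (n + 1) (S.Z (a + 3 + n)) Y) ↔ HomExact Y (S.d a) (S.d (a + 1)) := by
  set j := a + 3 + n
  have hres := _root_.subsingleton_ext_succ_iff_homExact (fun m : ℕ => S.P (j - 1 - m))
    (fun m => S.dOfEq (by push_cast; ring : j - 1 - (m + 1 : ℕ) + 1 = j - 1 - m))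
    (fun m => S.exact_dOfEq _ _) (S.πOfEq (by simp : j - 1 - (0 : ℕ) + 1 = j))
    (fun m => hP _) (S.surjective_πOfEq _) (S.exact_dOfEq_πOfEq _ _) k n Y
  rw [hres, homExact_dOfEq_iff]
  have ha : j - 1 - ((n + 1 : ℕ) + 1 : ℕ) = a := by push_cast; omega
  rw [ha]

lemma forall_memPerp_iff (k : Type) [Field k] [Algebra k R] (hP : ∀ i, Projective (S.P i)) :
    (∀ i, MemPerp k R (S.Z i)) ↔ ∀ a, HomExact (ModuleCat.of R R) (S.d a) (S.d (a + 1)) := by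
  refine ⟨fun hZ a => ?_, fun hR i => ?_⟩
  · exact (S.subsingleton_ext_succ_iff_homExact k hP a 0 _).1 (hZ _ 1 one_pos)
  · intro j hj
    obtain ⟨n, rfl⟩ : ∃ n, j = n + 1 := ⟨j - 1, by omega⟩
    rw [show i = i - 3 - n + 3 + n by ring]
    exact (S.subsingleton_ext_succ_iff_homExact k hP _ n _).2 (hR _)

end ShortExactSplicing

theorem isGP_iff_exists_perp_resolution_general (k : Type) [Field k] (A : Type) [Ring A]
    [Algebra k A] [FiniteDimensional k A]
    (X : ModuleCat.{0} A) :
    IsGP A X ↔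
      ∃ (Xs P : ℤ → ModuleCat.{0} A),
        (∀ i, Module.Finite A (P i) ∧ Projective (P i)) ∧
        (∀ i, Module.Finite A (Xs i) ∧ MemPerp k A (Xs i)) ∧
        Nonempty (Xs 0 ≅ X) ∧
        (∀ i : ℤ, ∃ (ι : Xs i ⟶ P (i + 1)) (π : P (i + 1) ⟶ Xs (i + 1)),
          Function.Injective ι ∧ Function.Surjective π ∧ Function.Exact ι π) := by
  constructor
  · rintro ⟨P, d, hP, hd, hHom, ι, hι, hιd⟩
    let S := ShortExactSplicing.ofExact P d hd
    have : IsNoetherianRing A := isNoetherian_of_tower k inferInstance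
    have hZfin (i : ℤ) : Module.Finite A (S.Z i) := by
      have := (hP i).1
      exact inferInstanceAs (Module.Finite A (LinearMap.ker (d i).hom))
    have hZperp := (S.forall_memPerp_iff k fun i => (hP i).2).2 fun a =>
      hHom _ (Module.Finite.self A) ((IsProjective.iff_projective A).mp inferInstance) a
    have eX : S.Z 0 ≅ X := ((LinearEquiv.ofEq _ _ hιd.linearMap_ker_eq).trans
      (LinearEquiv.ofInjective _ hι).symm).toModuleIso
    -- `IsGP` embeds `X` into `P 0`, the statement embeds `X⁰` into `P¹`.
    refine ⟨S.Z, fun t => P (t - 1), fun i => hP (i - 1), fun i => ⟨hZfin i, hZperp i⟩, ⟨eX⟩,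
      fun i => ?_⟩
    beta_reduce
    rw [add_sub_cancel_right]
    exact ⟨S.ι i, S.π i, S.injective_ι i, S.surjective_π i, S.exact i⟩
  · rintro ⟨Z, P, hP, hZ, ⟨e⟩, hses⟩
    choose ι π hι hπ hιπ using hses
    let S : ShortExactSplicing A := ⟨fun i => P (i + 1), Z, ι, π, hι, hπ, hιπ⟩
    have hR := (S.forall_memPerp_iff k fun i => (hP (i + 1)).2).1 fun i => (hZ i).2
    refine ⟨S.P, S.d, fun i => hP (i + 1), S.exact_d, fun Q _ _ a => ?_, e.inv ≫ ι 0,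
      (hι 0).comp e.toLinearEquiv.symm.injective,
      e.toLinearEquiv.symm.precomp_exact_iff_exact.2 (S.exact_ι_d 0)⟩
    exact (hR a).of_finite_projective (S.d_comp_d a) Q

/-- `X` is Gorenstein projective iff there are short exact sequences
`0 → X^i → P^{i+1} → X^{i+1} → 0` (`i ∈ ℤ`) with `P^i` finitely generated projective,
`X^i ∈ ⊥A` and `X^0 = X`. -/
theorem isGP_iff_exists_perp_resolution (k : Type) [Field k] (A : Type) [Ring A]
    [Algebra k A] [FiniteDimensional k A]
    (X : ModuleCat.{0} A) (hX : Module.Finite A X) :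
    IsGP A X ↔
      ∃ (Xs P : ℤ → ModuleCat.{0} A),
        (∀ i, Module.Finite A (P i) ∧ Projective (P i)) ∧
        (∀ i, Module.Finite A (Xs i) ∧ MemPerp k A (Xs i)) ∧
        Nonempty (Xs 0 ≅ X) ∧
        (∀ i : ℤ, ∃ (ι : Xs i ⟶ P (i + 1)) (π : P (i + 1) ⟶ Xs (i + 1)),
          Function.Injective ι ∧ Function.Surjective π ∧ Function.Exact ι π) :=
  isGP_iff_exists_perp_resolution_general k A X
end
end
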